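/- arXiv:0905.1129 — 6 statements merged into one kernel-verified Lean document; each statement's English description precedes it below -/
import Mathlib

section
/- Let n ≥ 2 and let w = PE be a word over Σ_n = {1,…,n} satisfying the Pansiot condition, where q = |P| ≥ 1, |E| ≥ n−1, and w has period q. Then the Pansiot encoding b(w) has period q, and σ_n(c) is the identity permutation, where c is the prefix of b(w) of length q. (Thus b(w) is a kernel repetition of period q.) -/
/-- The finite word `u` has period `q`: `u_i = u_{i+q}` for all valid indices. -/
def HasPeriodL {α : Type*} (u : List α) (q : ℕ) : Prop :=
  ∀ i, i + q < u.length → u[i]? = u[i + q]?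


/-- The images of the letters 0 and 1 under the Pansiot map `σ_n` (on `Fin n`, where the
value `k` represents the letter `k+1` of `Σ_n = {1,…,n}`): `σ_n(0)` sends the letter
`i ↦ i+1` for `1 ≤ i ≤ n−2`, sends `n−1 ↦ 1` and fixes `n`; `σ_n(1)` is the `n`-cycle
`i ↦ i+1 (mod n)`. -/
def sigmaLetter (n : ℕ) : Bool → Equiv.Perm (Fin n)
  | true => finRotate n
  | false => if h : 1 ≤ n then Equiv.swap ⟨n - 1, by omega⟩ ⟨0, by omega⟩ * finRotate n else 1

/-- The monoid homomorphism `σ_n` on binary words (`σ_n(uw) = σ_n(u) ∘ σ_n(w)`). -/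
def sigmaW (n : ℕ) (w : List Bool) : Equiv.Perm (Fin n) :=
  (w.map (sigmaLetter n)).prod

/-- The Pansiot condition: every factor of `v` of length `n-1` consists of `n-1`
pairwise distinct letters. -/
def PansiotCond (n : ℕ) (v : List (Fin n)) : Prop :=
  ∀ i, i + (n - 1) ≤ v.length → ((v.drop i).take (n - 1)).Nodup

/-- The Pansiot encoding `b(v)` of a word `v` over `Σ_n`: a binary word of length
`|v| - (n-1)` whose `i`-th letter (0-indexed) is `0` iff `v_i = v_{i+n-1}`. -/
def pEncode (n : ℕ) (v : List (Fin n)) : List Bool :=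
  (List.range (v.length + 1 - n)).map fun i => decide (v[i]? ≠ v[i + (n - 1)]?)

/-!
Attach to each position `i` of `w` a permutation `f_i` of `Σ_n` whose first `n - 1` values
spell the factor `w_i ⋯ w_{i+n-2}`; its last value is then the letter missing from that factor.
The letter entering the factor at the next position is either the one leaving it (`b_i = 0`)
or the missing one (`b_i = 1`), and in both cases `f_{i+1} = f_i ∘ σ_n(b_i)`. Hence
`f_q = f_0 ∘ σ_n(c)` for the prefix `c` of length `q` of `b(w)`. Periodicity of `w` makes `f_q`
and `f_0` spell the same factor, so they are equal and `σ_n(c)` is the identity.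
-/

namespace Equiv.Perm

variable {α : Type*}

theorem apply_eq_of_forall_ne (f : Perm α) {a y : α} (h : ∀ x ≠ a, f x ≠ y) : f a = y := by
  by_contra hne
  exact h (f.symm y) (fun hx => hne (by rw [← hx, apply_symm_apply])) (apply_symm_apply f y)

theorem ext_of_forall_ne {f g : Perm α} (a : α) (h : ∀ x ≠ a, f x = g x) : f = g := by
  ext x
  by_cases hx : x = a
  · subst hx
    exact f.apply_eq_of_forall_ne fun y hy => h y hy ▸ g.injective.ne hy
  · exact h x hx

end Equiv.Perm

open Equiv

theorem List.Nodup.exists_perm_getElem? {n : ℕ} {l : List (Fin n)} (hl : l.Nodup) :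
    ∃ f : Equiv.Perm (Fin n), ∀ j : Fin n, j.val < l.length → l[j.val]? = some (f j) := by
  have hinj : Set.InjOn (fun j : Fin n => l[j.val]?.getD j) {j | j.val < l.length} := by
    intro i (hi : i.val < l.length) j (hj : j.val < l.length) hij
    simp only [List.getElem?_eq_getElem hi, List.getElem?_eq_getElem hj, Option.getD_some] at hij
    exact Fin.ext (hl.getElem_inj_iff.mp hij)
  obtain ⟨g, hg⟩ := Set.MapsTo.exists_equiv_extend_of_card_eq (t := Finset.univ)
    (by simp) (fun _ _ => Finset.mem_coe.mpr (Finset.mem_univ _)) hinj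
  refine ⟨g.trans (Equiv.subtypeUnivEquiv Finset.mem_univ), fun j hj => ?_⟩
  simp [hg j hj, List.getElem?_eq_getElem hj]

theorem sigmaLetter_false_apply (n : ℕ) (j : Fin n) :
    sigmaLetter n false j =
      swap ⟨n - 1, Nat.sub_lt j.pos one_pos⟩ ⟨0, j.pos⟩ (finRotate n j) := by
  rw [sigmaLetter, dif_pos (Nat.one_le_of_lt j.pos), Perm.mul_apply]

theorem sigmaLetter_apply_of_add_two_lt (n : ℕ) (b : Bool) {j : Fin n} (hj : j.val + 2 < n) :
    (sigmaLetter n b j).val = j.val + 1 := by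
  obtain ⟨m, rfl⟩ : ∃ m, n = m + 1 := ⟨n - 1, by omega⟩
  have hrot : (finRotate (m + 1) j).val = j.val + 1 :=
    coe_finRotate_of_ne_last fun h => by simp [h] at hj
  cases b
  · rw [sigmaLetter_false_apply, swap_apply_of_ne_of_ne] <;>
      simp only [ne_eq, Fin.ext_iff, hrot] <;> omega
  · exact hrot

theorem sigmaLetter_false_apply_of_add_two_eq (n : ℕ) {j : Fin n} (hj : j.val + 2 = n) :
    (sigmaLetter n false j).val = 0 := by
  obtain ⟨m, rfl⟩ : ∃ m, n = m + 1 := ⟨n - 1, by omega⟩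
  have hrot : finRotate (m + 1) j = ⟨m + 1 - 1, by omega⟩ :=
    Fin.ext (by rw [coe_finRotate_of_ne_last fun h => by simp [h] at hj]; simp; omega)
  rw [sigmaLetter_false_apply, hrot, swap_apply_left]

theorem sigmaLetter_true_apply_of_add_two_eq (n : ℕ) {j : Fin n} (hj : j.val + 2 = n) :
    (sigmaLetter n true j).val = n - 1 := by
  obtain ⟨m, rfl⟩ : ∃ m, n = m + 1 := ⟨n - 1, by omega⟩
  rw [sigmaLetter, coe_finRotate_of_ne_last fun h => by simp [h] at hj]
  omega

theorem sigmaW_append (n : ℕ) (u v : List Bool) :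
    sigmaW n (u ++ v) = sigmaW n u * sigmaW n v := by
  simp [sigmaW]

theorem sigmaW_singleton (n : ℕ) (b : Bool) : sigmaW n [b] = sigmaLetter n b := by
  simp [sigmaW]

theorem pEncode_length (n : ℕ) (v : List (Fin n)) : (pEncode n v).length = v.length + 1 - n := by
  simp [pEncode]

theorem pEncode_getElem? {n : ℕ} {v : List (Fin n)} {i : ℕ} (hi : i < v.length + 1 - n) :
    (pEncode n v)[i]? = some (decide (v[i]? ≠ v[i + (n - 1)]?)) := by
  simp [pEncode, hi]

theorem HasPeriodL.pEncode {n q : ℕ} {v : List (Fin n)} (hv : HasPeriodL v q) :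
    HasPeriodL (pEncode n v) q := by
  intro i hi
  rw [pEncode_length] at hi
  rcases Nat.eq_zero_or_pos n with rfl | hn
  · -- `n - 1` truncates at `n = 0`, where `v = []` and `b(v) = [false]`.
    cases v with
    | nil =>
      obtain ⟨rfl, rfl⟩ : i = 0 ∧ q = 0 := by simp at hi; omega
      rfl
    | cons a _ => exact a.elim0
  · rw [pEncode_getElem? (by omega), pEncode_getElem? (by omega), hv i (by omega),
      hv (i + (n - 1)) (by omega), Nat.add_right_comm]

theorem PansiotCond.getElem?_ne {n : ℕ} {w : List (Fin n)} (hw : PansiotCond n w) {i k k' : ℕ}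
    (hi : i + (n - 1) ≤ w.length) (hkk' : k < k') (hk' : k' < n - 1) :
    w[i + k]? ≠ w[i + k']? := by
  have := List.nodup_iff_getElem?_ne_getElem?.mp (hw i hi) k k' hkk' (by simp; omega)
  simpa [List.getElem?_take, hk', hkk'.trans hk'] using this

def IsFrame {n : ℕ} (w : List (Fin n)) (i : ℕ) (f : Perm (Fin n)) : Prop :=
  ∀ j : Fin n, j.val < n - 1 → w[i + j.val]? = some (f j)

namespace IsFrame

variable {n : ℕ} {w : List (Fin n)} {i : ℕ} {f : Perm (Fin n)}

theorem mul_sigmaLetter (hw : PansiotCond n w) (hf : IsFrame w i f) (hi : i + n ≤ w.length) :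
    IsFrame w (i + 1) (f * sigmaLetter n (decide (w[i]? ≠ w[i + (n - 1)]?))) := by
  intro j hj
  rw [Perm.mul_apply]
  rcases (by omega : j.val + 2 < n ∨ j.val + 2 = n) with hlt | hpenult
  · have hσ := sigmaLetter_apply_of_add_two_lt n (decide (w[i]? ≠ w[i + (n - 1)]?)) hlt
    have := hf (sigmaLetter n (decide (w[i]? ≠ w[i + (n - 1)]?)) j) (by omega)
    rwa [hσ, ← add_assoc, Nat.add_right_comm] at this
  rw [show i + 1 + j.val = i + (n - 1) by omega]
  by_cases hb : w[i]? = w[i + (n - 1)]?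
  · have hσ := sigmaLetter_false_apply_of_add_two_eq n hpenult
    have := hf (sigmaLetter n false j) (by omega)
    rwa [decide_eq_false (not_not_intro hb), ← hb, ← add_zero i, ← hσ]
  · obtain ⟨y, hy⟩ : ∃ y, w[i + (n - 1)]? = some y :=
      ⟨_, List.getElem?_eq_getElem (by omega : i + (n - 1) < w.length)⟩
    have hσ : sigmaLetter n true j = ⟨n - 1, by omega⟩ :=
      Fin.ext (sigmaLetter_true_apply_of_add_two_eq n hpenult)
    -- `w_{i+n-1}` is missing from the factor at `i`: it differs from `w_i` since `b_i = 1`,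
    -- and from the other letters by the Pansiot condition on the factor at `i + 1`.
    rw [decide_eq_true hb, hσ, hy, f.apply_eq_of_forall_ne]
    intro x hx hfx
    have hx' : x.val ≠ n - 1 := fun h => hx (Fin.ext h)
    have hxw := hf x (by omega)
    rw [hfx, ← hy] at hxw
    rcases Nat.eq_zero_or_pos x.val with h0 | hpos
    · exact hb (by rwa [h0, add_zero] at hxw)
    · refine hw.getElem?_ne (i := i + 1) (k := x.val - 1) (k' := n - 2) (by omega)
        (by omega) (by omega) ?_
      rwa [show i + 1 + (x.val - 1) = i + x.val by omega,
        show i + 1 + (n - 2) = i + (n - 1) by omega]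

theorem mul_sigmaW_take (hw : PansiotCond n w) (hf : IsFrame w 0 f) :
    ∀ i ≤ (pEncode n w).length, IsFrame w i (f * sigmaW n ((pEncode n w).take i))
  | 0, _ => by simpa [sigmaW] using hf
  | i + 1, hi => by
    have hi' : i < w.length + 1 - n := by rw [pEncode_length] at hi; omega
    rw [List.take_add_one, pEncode_getElem? hi', Option.toList_some, sigmaW_append,
      sigmaW_singleton, ← mul_assoc]
    exact (mul_sigmaW_take hw hf i (by omega)).mul_sigmaLetter hw (by omega)

theorem add_period {q : ℕ} (hper : HasPeriodL w q) (hf : IsFrame w i f)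
    (hiq : i + q + (n - 1) ≤ w.length) : IsFrame w (i + q) f := by
  intro j hj
  rw [Nat.add_right_comm, ← hper _ (by omega), hf j hj]

theorem unique {g : Perm (Fin n)} (hf : IsFrame w i f) (hg : IsFrame w i g) : f = g := by
  rcases n with _ | n
  · exact Subsingleton.elim f g
  refine Perm.ext_of_forall_ne (Fin.last n) fun j hj => Option.some_injective _ ?_
  have hj' : j.val < n := Fin.val_lt_last hj
  rw [← hf j (by omega), hg j (by omega)]

end IsFrame

theorem PansiotCond.exists_isFrame_zero {n : ℕ} {w : List (Fin n)} (hw : PansiotCond n w)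
    (hlen : n - 1 ≤ w.length) : ∃ f, IsFrame w 0 f := by
  obtain ⟨f, hf⟩ := (hw 0 (by omega)).exists_perm_getElem?
  refine ⟨f, fun j hj => ?_⟩
  simpa [List.getElem?_take, hj] using hf j (by simp; omega)

theorem pansiot_encode_kernel_repetition_general (n : ℕ) (P E : List (Fin n))
    (hE : n - 1 ≤ E.length)
    (hPansiot : PansiotCond n (P ++ E))
    (hper : HasPeriodL (P ++ E) P.length) :
    HasPeriodL (pEncode n (P ++ E)) P.length ∧
      sigmaW n ((pEncode n (P ++ E)).take P.length) = 1 := by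
  have hlen : (P ++ E).length = P.length + E.length := List.length_append
  refine ⟨hper.pEncode, ?_⟩
  obtain ⟨f, hf⟩ := hPansiot.exists_isFrame_zero (by omega)
  have hshift : IsFrame (P ++ E) P.length (f * sigmaW n ((pEncode n (P ++ E)).take P.length)) :=
    hf.mul_sigmaW_take hPansiot _ (by rw [pEncode_length]; omega)
  have hperiodic : IsFrame (P ++ E) P.length f := by
    simpa using hf.add_period hper (by omega)
  exact mul_eq_left.mp (hshift.unique hperiodic)

/-- If `w = PE` satisfies the Pansiot condition, `q = |P| ≥ 1`, `|E| ≥ n-1` and `w` has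
period `q`, then the Pansiot encoding `b(w)` has period `q` and `σ_n` applied to the
prefix of `b(w)` of length `q` is the identity: `b(w)` is a kernel repetition of period `q`. -/
theorem pansiot_encode_kernel_repetition (n : ℕ) (hn : 2 ≤ n) (P E : List (Fin n))
    (hP : 1 ≤ P.length) (hE : n - 1 ≤ E.length)
    (hPansiot : PansiotCond n (P ++ E))
    (hper : HasPeriodL (P ++ E) P.length) :
    HasPeriodL (pEncode n (P ++ E)) P.length ∧
      sigmaW n ((pEncode n (P ++ E)).take P.length) = 1 :=
  pansiot_encode_kernel_repetition_general n P E hE hPansiot hper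
end

section
/- Let n ≥ 2 and let u be a word over Σ_n = {1,…,n} satisfying the Pansiot condition, with |u| ≥ q + n − 1 for some q ≥ 1. If the Pansiot encoding b(u) has period q and σ_n(c) is the identity permutation, where c is the prefix of b(u) of length q, then u itself has period q (so that u = PE = EP′ for words P, P′, E with |P| = |P′| = q). -/
namespace PansiotAux

/-- The letter of `u` at position `k` (with a junk default). -/
def lett (n : ℕ) [NeZero n] (u : List (Fin n)) (k : ℕ) : Fin n :=
  u.getD k 0

/-- The missing letter of the window of `u` of length `n-1` starting at `i`. -/
def missFin (n : ℕ) [NeZero n] (u : List (Fin n)) (i : ℕ) : Fin n :=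
  (∑ j : Fin n, j) - ((u.drop i).take (n-1)).sum

/-- The state function: the window letters followed by the missing letter. -/
def fSt (n : ℕ) [NeZero n] (u : List (Fin n)) (i : ℕ) (j : Fin n) : Fin n :=
  if (j : ℕ) < n - 1 then lett n u (i + j) else missFin n u i

lemma lett_eq_getElem {n : ℕ} [NeZero n] {u : List (Fin n)} {k : ℕ} (h : k < u.length) :
    lett n u k = u[k] := List.getD_eq_getElem u 0 h

lemma compl_eq_sub {n : ℕ} [NeZero n] (l : List (Fin n)) (hnd : l.Nodup)
    (hlen : l.length = n - 1) {x : Fin n} (hx : x ∉ l) :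
    x = (∑ j : Fin n, j) - l.sum := by
  have hn := NeZero.pos n
  have hcard : l.toFinset.card = n - 1 := by
    rw [List.toFinset_card_of_nodup hnd, hlen]
  have hxm : x ∉ l.toFinset := by simpa using hx
  have huniv : insert x l.toFinset = Finset.univ := by
    apply Finset.eq_univ_of_card
    rw [Finset.card_insert_of_notMem hxm, hcard, Fintype.card_fin]
    omega
  have hsum : (∑ j : Fin n, j) = x + l.sum := by
    rw [← huniv, Finset.sum_insert hxm]
    congr 1
    rw [List.sum_toFinset _ hnd]
    simp
  rw [hsum, add_sub_cancel_right]

section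
variable {n : ℕ} [NeZero n] {u : List (Fin n)}

omit [NeZero n] in
lemma window_length (i : ℕ) (h : i + (n-1) ≤ u.length) :
    ((u.drop i).take (n-1)).length = n - 1 := by
  simp [List.length_take, List.length_drop]; omega

lemma window_getElem (i k : ℕ) (hk : k < n - 1) (h : i + (n-1) ≤ u.length) :
    ((u.drop i).take (n-1))[k]'(by rw [window_length i h]; exact hk) = lett n u (i + k) := by
  rw [List.getElem_take, List.getElem_drop, lett_eq_getElem (by omega)]

lemma window_nd (hP : PansiotCond n u) (i : ℕ) (h : i + (n-1) ≤ u.length)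
    {k l : ℕ} (hk : k < n-1) (hl : l < n-1)
    (heq : lett n u (i+k) = lett n u (i+l)) : k = l := by
  have hnd := hP i h
  rw [← window_getElem i k hk h, ← window_getElem i l hl h] at heq
  exact (hnd.getElem_inj_iff).mp heq

lemma notMem_window (i : ℕ) (h : i + (n-1) ≤ u.length) {x : Fin n}
    (hx : ∀ k, k < n-1 → x ≠ lett n u (i+k)) : x ∉ (u.drop i).take (n-1) := by
  rw [List.mem_iff_getElem]
  rintro ⟨k, hk, hke⟩
  have hk' : k < n - 1 := by rw [window_length i h] at hk; exact hk
  exact hx k hk' (by rw [← window_getElem i k hk' h, hke])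

lemma eq_missFin (hP : PansiotCond n u) (i : ℕ) (h : i + (n-1) ≤ u.length) {x : Fin n}
    (hx : ∀ k, k < n-1 → x ≠ lett n u (i+k)) : x = missFin n u i :=
  compl_eq_sub _ (hP i h) (window_length i h) (notMem_window i h hx)

lemma missFin_ne (hP : PansiotCond n u) (i : ℕ) (h : i + (n-1) ≤ u.length) :
    ∀ k, k < n-1 → missFin n u i ≠ lett n u (i+k) := by
  have hn := NeZero.pos n
  have hcard : ((u.drop i).take (n-1)).toFinset.card = n - 1 := by
    rw [List.toFinset_card_of_nodup (hP i h), window_length i h]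
  have hne : (((u.drop i).take (n-1)).toFinsetᶜ : Finset (Fin n)).Nonempty := by
    rw [← Finset.card_pos, Finset.card_compl, hcard, Fintype.card_fin]; omega
  obtain ⟨y, hy⟩ := hne
  have hy' : y ∉ (u.drop i).take (n-1) := by
    simpa [List.mem_toFinset] using (Finset.mem_compl.mp hy)
  have hym : y = missFin n u i :=
    compl_eq_sub _ (hP i h) (window_length i h) hy'
  intro k hk hcontra
  apply hy'
  rw [List.mem_iff_getElem]
  exact ⟨k, by rw [window_length i h]; exact hk,
    by rw [window_getElem i k hk h, ← hcontra, ← hym]⟩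

end

lemma sigmaLetter_true_val {n : ℕ} (hn : 2 ≤ n) (j : Fin n) :
    ((sigmaLetter n true) j : ℕ) = if (j : ℕ) = n - 1 then 0 else (j : ℕ) + 1 := by
  obtain ⟨m, rfl⟩ : ∃ m, n = m + 1 := ⟨n - 1, by omega⟩
  show ((finRotate (m+1)) j : ℕ) = _
  rw [finRotate_succ_apply, Fin.val_add_one]
  rcases eq_or_ne j (Fin.last m) with h | h
  · simp [h, Fin.val_last]
  · have : (j : ℕ) ≠ m := fun hc => h (Fin.ext (by simp [Fin.val_last, hc]))
    simp [h, this]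

lemma sigmaLetter_false_val {n : ℕ} (hn : 2 ≤ n) (j : Fin n) :
    ((sigmaLetter n false) j : ℕ) =
      if (j : ℕ) = n - 2 then 0 else if (j : ℕ) = n - 1 then n - 1 else (j : ℕ) + 1 := by
  have h1 : 1 ≤ n := by omega
  have hsl : sigmaLetter n false
      = Equiv.swap ⟨n - 1, by omega⟩ ⟨0, by omega⟩ * finRotate n := by
    simp [sigmaLetter, h1]
  rw [hsl, Equiv.Perm.mul_apply]
  have hrot : ((finRotate n) j : ℕ) = if (j : ℕ) = n - 1 then 0 else (j : ℕ) + 1 :=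
    sigmaLetter_true_val hn j
  have hj := j.isLt
  by_cases hj2 : (j : ℕ) = n - 2
  · have hne : ¬ ((j : ℕ) = n - 1) := by omega
    have hr : finRotate n j = (⟨n - 1, by omega⟩ : Fin n) := by
      apply Fin.eq_of_val_eq
      rw [hrot, if_neg hne]
      show (j : ℕ) + 1 = n - 1
      omega
    rw [hr, Equiv.swap_apply_left, if_pos hj2]
  · by_cases hj1 : (j : ℕ) = n - 1
    · have hr : finRotate n j = (⟨0, by omega⟩ : Fin n) := by
        apply Fin.eq_of_val_eq
        rw [hrot, if_pos hj1]
      rw [hr, Equiv.swap_apply_right, if_neg hj2, if_pos hj1]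
    · have hr1 : finRotate n j ≠ (⟨n - 1, by omega⟩ : Fin n) := by
        intro hc
        have hc' := congrArg Fin.val hc
        rw [hrot, if_neg hj1] at hc'
        have hx : (j : ℕ) + 1 = n - 1 := hc'
        omega
      have hr2 : finRotate n j ≠ (⟨0, by omega⟩ : Fin n) := by
        intro hc
        have hc' := congrArg Fin.val hc
        rw [hrot, if_neg hj1] at hc'
        have hx : (j : ℕ) + 1 = 0 := hc'
        omega
      rw [Equiv.swap_apply_of_ne_of_ne hr1 hr2, hrot, if_neg hj1, if_neg hj2, if_neg hj1]

lemma sigmaW_append_singleton (n : ℕ) (w : List Bool) (c : Bool) :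
    sigmaW n (w ++ [c]) = sigmaW n w * sigmaLetter n c := by
  simp [sigmaW]

lemma pEncode_getElem? {n : ℕ} [NeZero n] (u : List (Fin n)) (i : ℕ)
    (h : i + n ≤ u.length) :
    (pEncode n u)[i]? = some (decide (lett n u i ≠ lett n u (i + (n-1)))) := by
  have hn := NeZero.pos n
  unfold pEncode
  rw [List.getElem?_map, List.getElem?_range (by omega)]
  simp only [Option.map_some]
  congr 1
  have h1 : i < u.length := by omega
  have h2 : i + (n - 1) < u.length := by omega
  rw [List.getElem?_eq_getElem h1, List.getElem?_eq_getElem h2,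
    lett_eq_getElem h1, lett_eq_getElem h2]
  simp

lemma fSt_step {n : ℕ} [NeZero n] (hn : 2 ≤ n) (u : List (Fin n))
    (hP : PansiotCond n u) (i : ℕ) (h : i + n ≤ u.length) :
    fSt n u (i+1) = fSt n u i ∘
      ⇑(sigmaLetter n (decide (lett n u i ≠ lett n u (i + (n-1))))) := by
  have h1 : i + (n-1) ≤ u.length := by omega
  have h2 : (i+1) + (n-1) ≤ u.length := by omega
  funext j
  have hj := j.isLt
  simp only [Function.comp_apply]
  by_cases hAB : lett n u i = lett n u (i + (n-1))
  · -- encoding letter is false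
    have hc : decide (lett n u i ≠ lett n u (i + (n-1))) = false := by simp [hAB]
    rw [hc]
    have hsv := sigmaLetter_false_val hn j
    set s := (sigmaLetter n false) j with hs
    by_cases hj2 : (j : ℕ) = n - 2
    · -- s = 0
      have hsv' : (s : ℕ) = 0 := by rw [hsv, if_pos hj2]
      unfold fSt
      rw [if_pos (show (j:ℕ) < n - 1 by omega), if_pos (show (s:ℕ) < n - 1 by omega)]
      have h3 : i + 1 + (j : ℕ) = i + (n-1) := by omega
      have h4 : i + (s : ℕ) = i := by omega
      rw [h3, h4]
      exact hAB.symm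
    · by_cases hj1 : (j : ℕ) = n - 1
      · -- s = n-1 : both sides missing letters, equal windows
        have hsv' : (s : ℕ) = n - 1 := by rw [hsv, if_neg hj2, if_pos hj1]
        unfold fSt
        rw [if_neg (show ¬ ((j:ℕ) < n - 1) by omega),
          if_neg (show ¬ ((s:ℕ) < n - 1) by omega)]
        apply eq_missFin hP i h1
        intro k hk
        rcases Nat.eq_zero_or_pos k with rfl | hkpos
        · have h3' : i + (n-1) = (i+1) + (n-2) := by omega
          rw [show i + 0 = i from rfl, hAB, h3']
          exact missFin_ne hP (i+1) h2 (n-2) (by omega)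
        · have h3 : i + k = (i+1) + (k-1) := by omega
          rw [h3]
          exact missFin_ne hP (i+1) h2 (k-1) (by omega)
      · -- j < n-2, s = j+1
        have hsv' : (s : ℕ) = (j : ℕ) + 1 := by rw [hsv, if_neg hj2, if_neg hj1]
        unfold fSt
        rw [if_pos (show (j:ℕ) < n - 1 by omega), if_pos (show (s:ℕ) < n - 1 by omega), hsv']
        congr 1
        omega
  · -- encoding letter is true
    have hc : decide (lett n u i ≠ lett n u (i + (n-1))) = true := by simp [hAB]
    rw [hc]
    have hsv := sigmaLetter_true_val hn j
    set s := (sigmaLetter n true) j with hs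
    by_cases hj1 : (j : ℕ) = n - 1
    · -- s = 0; LHS = missFin (i+1) = lett i
      have hsv' : (s : ℕ) = 0 := by rw [hsv, if_pos hj1]
      unfold fSt
      rw [if_neg (show ¬ ((j:ℕ) < n - 1) by omega),
        if_pos (show (s:ℕ) < n - 1 by omega), hsv', Nat.add_zero]
      symm
      apply eq_missFin hP (i+1) h2
      intro k hk hcontra
      rcases Nat.lt_or_ge k (n-2) with hk2 | hk2
      · have he : (i+1) + k = i + (k+1) := by omega
        rw [he] at hcontra
        have := window_nd hP i h1 (show 0 < n - 1 by omega) (show k + 1 < n - 1 by omega)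
          (by rw [Nat.add_zero]; exact hcontra)
        omega
      · have he : (i+1) + k = i + (n-1) := by omega
        rw [he] at hcontra
        exact hAB hcontra
    · by_cases hj2 : (j : ℕ) = n - 2
      · -- s = n-1; LHS = lett (i+(n-1)) = missFin i
        have hsv' : (s : ℕ) = n - 1 := by rw [hsv, if_neg hj1]; omega
        unfold fSt
        rw [if_pos (show (j:ℕ) < n - 1 by omega), if_neg (show ¬ ((s:ℕ) < n - 1) by omega)]
        have he : i + 1 + (j : ℕ) = i + (n-1) := by omega
        rw [he]
        apply eq_missFin hP i h1
        intro k hk hcontra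
        rcases Nat.eq_zero_or_pos k with rfl | hkpos
        · rw [Nat.add_zero] at hcontra; exact hAB hcontra.symm
        · have he1 : i + (n-1) = (i+1) + (n-2) := by omega
          have he2 : i + k = (i+1) + (k-1) := by omega
          rw [he1, he2] at hcontra
          have := window_nd hP (i+1) h2 (show n - 2 < n - 1 by omega)
            (show k - 1 < n - 1 by omega) hcontra
          omega
      · have hsv' : (s : ℕ) = (j : ℕ) + 1 := by rw [hsv, if_neg hj1]
        unfold fSt
        rw [if_pos (show (j:ℕ) < n - 1 by omega), if_pos (show (s:ℕ) < n - 1 by omega), hsv']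
        congr 1
        omega

lemma fSt_iter {n : ℕ} [NeZero n] (hn : 2 ≤ n) (u : List (Fin n))
    (hP : PansiotCond n u) (i : ℕ) :
    ∀ m, i + m + (n-1) ≤ u.length →
      fSt n u (i+m) = fSt n u i ∘ ⇑(sigmaW n (((pEncode n u).drop i).take m)) := by
  intro m
  induction m with
  | zero =>
    intro _
    simp [sigmaW]
  | succ m ih =>
    intro h
    have h' : i + m + (n-1) ≤ u.length := by omega
    have hstep := fSt_step hn u hP (i+m) (by omega)
    have hgl : ((pEncode n u).drop i)[m]? =
        some (decide (lett n u (i+m) ≠ lett n u ((i+m) + (n-1)))) := by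
      rw [List.getElem?_drop]
      exact pEncode_getElem? u (i+m) (by omega)
    have htake : ((pEncode n u).drop i).take (m+1)
        = ((pEncode n u).drop i).take m
          ++ [decide (lett n u (i+m) ≠ lett n u ((i+m) + (n-1)))] := by
      rw [List.take_succ, hgl]
      rfl
    have he : i + (m+1) = (i+m) + 1 := by omega
    rw [he, hstep, ih h', htake, sigmaW_append_singleton, Equiv.Perm.coe_mul]
    rfl

end PansiotAux

/-- Conversely: if `u` satisfies the Pansiot condition, `|u| ≥ q + n - 1` for some
`q ≥ 1`, the Pansiot encoding `b(u)` has period `q`, and `σ_n` applied to the prefix of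
`b(u)` of length `q` is the identity, then `u` itself has period `q` (so that
`u = PE = EP′` with `|P| = |P′| = q`). -/
theorem pansiot_decode_kernel_repetition (n : ℕ) (hn : 2 ≤ n) (u : List (Fin n))
    (q : ℕ) (hq : 1 ≤ q) (hlen : q + n - 1 ≤ u.length)
    (hPansiot : PansiotCond n u)
    (hper : HasPeriodL (pEncode n u) q)
    (hker : sigmaW n ((pEncode n u).take q) = 1) :
    HasPeriodL u q := by
  haveI : NeZero n := ⟨by omega⟩
  have hblen : (pEncode n u).length = u.length + 1 - n := by simp [pEncode]
  -- slice equality from periodicity of the encoding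
  have hslice : ∀ i, i + q ≤ (pEncode n u).length →
      ((pEncode n u).drop q).take i = (pEncode n u).take i := by
    intro i hi
    apply List.ext_getElem?
    intro k
    rw [List.getElem?_take, List.getElem?_take, List.getElem?_drop]
    split_ifs with hk
    · have hp := hper k (by omega)
      rw [show q + k = k + q by omega]
      exact hp.symm
    · rfl
  -- period of the state function
  have hfq : ∀ i, i + q + (n-1) ≤ u.length →
      PansiotAux.fSt n u (i+q) = PansiotAux.fSt n u i := by
    intro i hi
    have h2 := PansiotAux.fSt_iter hn u hPansiot 0 q (by omega)
    have h3 := PansiotAux.fSt_iter hn u hPansiot 0 i (by omega)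
    have h1 := PansiotAux.fSt_iter hn u hPansiot q i (by omega)
    simp only [Nat.zero_add, List.drop_zero] at h2 h3
    have hq0 : PansiotAux.fSt n u q = PansiotAux.fSt n u 0 := by
      rw [h2, hker]
      rfl
    have hs : ((pEncode n u).drop q).take i = (pEncode n u).take i :=
      hslice i (by omega)
    have he : i + q = q + i := by omega
    rw [he, h1, hq0, hs, ← h3]
  intro i hi
  -- choose the evaluation window
  set i' := max q (i + q + 2 - n) with hi'
  have hi'le : i' ≤ i + q := by omega
  have hi'q : q ≤ i' := le_max_left _ _
  have hjlt : i + q - i' < n - 1 := by omega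
  have hwin : i' + (n-1) ≤ u.length := by omega
  have hprd := hfq (i' - q) (by omega)
  have hiq : i' - q + q = i' := by omega
  rw [hiq] at hprd
  have hj : (i + q - i' : ℕ) < n := by omega
  have hev := congrFun hprd ⟨i + q - i', hj⟩
  unfold PansiotAux.fSt at hev
  rw [if_pos (by rw [Fin.val_mk]; exact hjlt), if_pos (by rw [Fin.val_mk]; exact hjlt)] at hev
  rw [Fin.val_mk] at hev
  have he1 : i' + (i + q - i') = i + q := by omega
  have he2 : i' - q + (i + q - i') = i := by omega
  rw [he1, he2] at hev
  rw [List.getElem?_eq_getElem (show i < u.length by omega),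
    List.getElem?_eq_getElem (show i + q < u.length by omega)]
  rw [← PansiotAux.lett_eq_getElem (show i < u.length by omega),
    ← PansiotAux.lett_eq_getElem (show i + q < u.length by omega), hev]
end

section
/- Let h : {0,1}* → {0,1}* be an r-uniform morphism (r ≥ 1) and let 𝐮 be an infinite fixed point of h. Let U be the set of length-2 factors of 𝐮. If v is a binary word of length r that is a factor of 𝐮 and v is 2-markable with respect to h and U, then v is markable with respect to h and 𝐮. -/
/-- The factor of the infinite word `w` starting at position `i`, of length `L`. -/
def wordOf {α : Type*} (w : ℕ → α) (i L : ℕ) : List α :=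
  (List.range L).map fun k => w (i + k)

/-- The finite word `v` occurs in the infinite word `w` at position `i`. -/
def OccursAt {α : Type*} (v : List α) (w : ℕ → α) (i : ℕ) : Prop :=
  wordOf w i v.length = v

/-- The finite word `v` is a prefix of the infinite word `w`. -/
def PrefixOfInf {α : Type*} (v : List α) (w : ℕ → α) : Prop :=
  wordOf w 0 v.length = v

/-- The extension of the morphism `h` on `{0,1}` to binary words. -/
def mor (h : Bool → List Bool) (w : List Bool) : List Bool :=
  (w.map h).flatten

/-- The infinite binary word `u` is a fixed point of the morphism `h`:
the image of any prefix of `u` is again a prefix of `u`. -/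
def FixedPointOf (h : Bool → List Bool) (u : ℕ → Bool) : Prop :=
  ∀ p : List Bool, PrefixOfInf p u → PrefixOfInf (mor h p) u

/-- `v` is markable with respect to the `r`-uniform morphism `h` and its fixed point `u`:
whenever `h(X)xv` and `h(Y)yv` are prefixes of `u` with `|x|, |y| < r`, then `x = y`. -/
def Markable (h : Bool → List Bool) (r : ℕ) (u : ℕ → Bool) (v : List Bool) : Prop :=
  ∀ X Y x y : List Bool, x.length < r → y.length < r →
    PrefixOfInf (mor h X ++ x ++ v) u → PrefixOfInf (mor h Y ++ y ++ v) u → x = y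

/-- `v` is 2-markable with respect to `h` and the set `U` of length-2 words:
whenever `u, u' ∈ U`, `h(X)xv` is a prefix of `h(u)` with `|x| < r`, and `h(Y)yv` is a
prefix of `h(u')` with `|y| < r`, then `x = y`. -/
def TwoMarkable (h : Bool → List Bool) (r : ℕ) (U : Set (List Bool)) (v : List Bool) : Prop :=
  ∀ w ∈ U, ∀ w' ∈ U, ∀ X Y x y : List Bool, x.length < r → y.length < r →
    (mor h X ++ x ++ v) <+: mor h w → (mor h Y ++ y ++ v) <+: mor h w' → x = y


lemma wordOf_length {α : Type*} (w : ℕ → α) (i L : ℕ) : (wordOf w i L).length = L := by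
  simp [wordOf]

lemma wordOf_add {α : Type*} (w : ℕ → α) (i a b : ℕ) :
    wordOf w i (a + b) = wordOf w i a ++ wordOf w (i + a) b := by
  simp [wordOf, List.range_add, Function.comp, Nat.add_assoc]

lemma wordOf_prefix {α : Type*} (w : ℕ → α) (i : ℕ) {a b : ℕ} (hab : a ≤ b) :
    wordOf w i a <+: wordOf w i b := by
  obtain ⟨c, rfl⟩ := Nat.exists_eq_add_of_le hab
  rw [wordOf_add]
  exact List.prefix_append _ _

lemma mor_nil (h : Bool → List Bool) : mor h [] = [] := rfl

lemma mor_cons (h : Bool → List Bool) (a : Bool) (t : List Bool) :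
    mor h (a :: t) = h a ++ mor h t := by simp [mor]

lemma mor_append (h : Bool → List Bool) (a b : List Bool) :
    mor h (a ++ b) = mor h a ++ mor h b := by simp [mor]

lemma mor_length (h : Bool → List Bool) (r : ℕ)
    (h0 : (h false).length = r) (h1 : (h true).length = r) (X : List Bool) :
    (mor h X).length = r * X.length := by
  induction X with
  | nil => simp [mor_nil]
  | cons a t ih =>
      rw [mor_cons, List.length_append, ih, List.length_cons]
      cases a <;> simp [h0, h1, Nat.mul_succ, Nat.add_comm]

lemma prefixOfInf_append {u : ℕ → Bool} {a b : List Bool}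
    (H : PrefixOfInf (a ++ b) u) :
    a = wordOf u 0 a.length ∧ b = wordOf u a.length b.length := by
  unfold PrefixOfInf at H
  rw [List.length_append, wordOf_add, Nat.zero_add] at H
  have := List.append_inj H.symm (by rw [wordOf_length])
  exact ⟨this.1, this.2⟩

lemma prefixOfInf_wordOf (u : ℕ → Bool) (n : ℕ) : PrefixOfInf (wordOf u 0 n) u := by
  unfold PrefixOfInf
  rw [wordOf_length]

lemma key_lemma (h : Bool → List Bool) (r : ℕ)
    (h0 : (h false).length = r) (h1 : (h true).length = r)
    (u : ℕ → Bool) (hfix : FixedPointOf h u)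
    (v : List Bool) (hv : v.length = r)
    (X x : List Bool) (hx : x.length < r)
    (hP : PrefixOfInf (mor h X ++ x ++ v) u) :
    ∃ w : List Bool, w.length = 2 ∧ (∃ i, OccursAt w u i) ∧ (x ++ v) <+: mor h w := by
  set n := X.length with hn
  rw [List.append_assoc] at hP
  obtain ⟨hX, hxv⟩ := prefixOfInf_append hP
  have hmXlen : (mor h X).length = r * n := mor_length h r h0 h1 X
  set w := wordOf u n 2 with hw
  refine ⟨w, wordOf_length u n 2, ⟨n, ?_⟩, ?_⟩
  · unfold OccursAt
    rw [hw, wordOf_length]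
  · -- mor h w is the segment of u at position r*n of length 2r
    have hP2 : PrefixOfInf (wordOf u 0 (n + 2)) u := prefixOfInf_wordOf u (n + 2)
    have hP3 := hfix _ hP2
    rw [wordOf_add, Nat.zero_add, mor_append] at hP3
    obtain ⟨_, hmw⟩ := prefixOfInf_append hP3
    have hlen1 : (mor h (wordOf u 0 n)).length = r * n := by
      rw [mor_length h r h0 h1, wordOf_length]
    have hlen2 : (mor h w).length = r * 2 := by
      rw [mor_length h r h0 h1, wordOf_length]
    rw [hlen1, hlen2] at hmw
    have hxvlen : (x ++ v).length = x.length + r := by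
      rw [List.length_append, hv]
    rw [hmXlen, hxvlen] at hxv
    rw [hxv, hmw]
    exact wordOf_prefix u (r * n) (by omega)

/-- If `v` has length `r`, is a factor of the fixed point `𝐮` of the `r`-uniform morphism
`h`, and is 2-markable with respect to `h` and the set `U` of length-2 factors of `𝐮`,
then `v` is markable with respect to `h` and `𝐮`. -/
theorem twoMarkable_markable (h : Bool → List Bool) (r : ℕ) (hr : 1 ≤ r)
    (h0 : (h false).length = r) (h1 : (h true).length = r)
    (u : ℕ → Bool) (hfix : FixedPointOf h u)
    (v : List Bool) (hv : v.length = r) (hvf : ∃ i, OccursAt v u i)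
    (h2m : TwoMarkable h r {w : List Bool | w.length = 2 ∧ ∃ i, OccursAt w u i} v) :
    Markable h r u v := by
  intro X Y x y hx hy hPx hPy
  obtain ⟨wX, hwXl, hwXo, hwXp⟩ := key_lemma h r h0 h1 u hfix v hv X x hx hPx
  obtain ⟨wY, hwYl, hwYo, hwYp⟩ := key_lemma h r h0 h1 u hfix v hv Y y hy hPy
  exact h2m wX ⟨hwXl, hwXo⟩ wY ⟨hwYl, hwYo⟩ [] [] x y hx hy
    (by simpa [mor_nil] using hwXp) (by simpa [mor_nil] using hwYp)
end

section
/- Let n ≥ 2 and let h : {0,1}* → {0,1}* be an r-uniform morphism with r ≥ 2 and h(0) ≠ h(1), satisfying the algebraic condition for σ_n, and let 𝐮 be an infinite fixed point of h (indexed from 0) such that every factor of 𝐮 of length at least r is markable with respect to h and 𝐮. Let η′ be the longest common prefix of h(0) and h(1). Suppose V = PE occurs in 𝐮 at position d, where q = |P| ≥ 1, |E| ≥ 1, V has period q, σ_n(P) is the identity, and the occurrence is maximal with period q (i.e., (d = 0 or the word 𝐮(d−1)𝐮(d)⋯𝐮(d+|V|−1) does not have period q) and 𝐮(d)⋯𝐮(d+|V|)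 does not have period q). Then there exist an integer s ≥ 0 and finite binary words 𝒫, 𝓔 such that: 𝒫𝓔 occurs in 𝐮, 𝒫𝓔 has period |𝒫| ≥ 1, σ_n(𝒫) is the identity, 𝓔 is not markable with respect to h and 𝐮 (hence |𝓔| < r), and |PE| = r^s·|𝒫𝓔| + |η′|·(r^s − 1)/(r − 1) and |P| = r^s·|𝒫|. -/
/-- `h` satisfies the algebraic condition for `σ_n`: some `τ` conjugates `σ_n(h(0))` to
`σ_n(0)` and `σ_n(h(1))` to `σ_n(1)`. -/
def AlgCond (n : ℕ) (h : Bool → List Bool) : Prop :=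
  ∃ τ : Equiv.Perm (Fin n),
    τ * sigmaW n (h false) * τ⁻¹ = sigmaLetter n false ∧
    τ * sigmaW n (h true) * τ⁻¹ = sigmaLetter n true

/-- Longest common prefix of two binary words. -/
def lcp (a b : List Bool) : List Bool :=
  ((a.zip b).takeWhile fun p => p.1 == p.2).map Prod.fst

/-- The occurrence at position `d` of the factor of length `L` of the infinite word `u`
is maximal with period `q`: it can be extended neither to the left nor to the right
keeping period `q`. -/
def MaxOcc (u : ℕ → Bool) (d L q : ℕ) : Prop :=
  (d = 0 ∨ ¬ HasPeriodL (wordOf u (d - 1) (L + 1)) q) ∧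
    ¬ HasPeriodL (wordOf u d (L + 1)) q

namespace KRD
variable {α : Type*}

lemma wordOf_length (w : ℕ → α) (i L : ℕ) : (wordOf w i L).length = L := by
  simp [wordOf]

lemma wordOf_getElem? (w : ℕ → α) (i L k : ℕ) (hk : k < L) :
    (wordOf w i L)[k]? = some (w (i + k)) := by
  simp [wordOf, List.getElem?_map, List.getElem?_range, hk]

lemma wordOf_append (w : ℕ → α) (i L1 L2 : ℕ) :
    wordOf w i (L1 + L2) = wordOf w i L1 ++ wordOf w (i + L1) L2 := by
  simp [wordOf, List.range_add, Function.comp, add_assoc]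

lemma wordOf_one (w : ℕ → α) (i : ℕ) : wordOf w i 1 = [w i] := by
  simp [wordOf, List.range_succ]

lemma wordOf_eq_iff (w w' : ℕ → α) (i i' L : ℕ) :
    wordOf w i L = wordOf w' i' L ↔ ∀ k < L, w (i + k) = w' (i' + k) := by
  unfold wordOf
  rw [List.map_inj_left]
  simp

lemma hasPeriodL_wordOf_iff (u : ℕ → α) (d L q : ℕ) :
    HasPeriodL (wordOf u d L) q ↔ ∀ i, i + q < L → u (d + i) = u (d + (i + q)) := by
  unfold HasPeriodL
  rw [wordOf_length]
  constructor
  · intro hp i hi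
    have := hp i hi
    rw [wordOf_getElem? u d L i (by omega), wordOf_getElem? u d L (i+q) hi] at this
    exact Option.some.inj this
  · intro hp i hi
    rw [wordOf_getElem? u d L i (by omega), wordOf_getElem? u d L (i+q) hi, hp i hi]

lemma prefixOfInf_wordOf (u : ℕ → α) (N : ℕ) : PrefixOfInf (wordOf u 0 N) u := by
  unfold PrefixOfInf
  rw [wordOf_length]

lemma prefixOfInf_of_eq (u : ℕ → α) (N : ℕ) (v : List α) (hv : v = wordOf u 0 N) :
    PrefixOfInf v u := by subst hv; exact prefixOfInf_wordOf u N

lemma occursAt_wordOf (u : ℕ → α) (i L : ℕ) : OccursAt (wordOf u i L) u i := by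
  unfold OccursAt
  rw [wordOf_length]

lemma mor_append (h : Bool → List Bool) (a b : List Bool) :
    mor h (a ++ b) = mor h a ++ mor h b := by simp [mor]

lemma mor_cons (h : Bool → List Bool) (c : Bool) (a : List Bool) :
    mor h (c :: a) = h c ++ mor h a := by simp [mor]

lemma mor_length (h : Bool → List Bool) (r : ℕ) (hb : ∀ b, (h b).length = r)
    (w : List Bool) : (mor h w).length = r * w.length := by
  induction w with
  | nil => simp [mor]
  | cons c w ih => rw [mor_cons]; simp [hb, ih]; ring

lemma lcp_spec : ∀ (a b : List Bool), a.length = b.length → a ≠ b →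
    (lcp a b).length < a.length ∧ (∀ j < (lcp a b).length, a[j]? = b[j]?) ∧
      a[(lcp a b).length]? ≠ b[(lcp a b).length]? := by
  intro a
  induction a with
  | nil => intro b hl hne; cases b with
    | nil => exact absurd rfl hne
    | cons _ _ => simp at hl
  | cons c a ih =>
    intro b hl hne
    cases b with
    | nil => simp at hl
    | cons e b2 =>
      by_cases hc : c = e
      · subst hc
        have hne2 : a ≠ b2 := by intro hh; exact hne (by rw [hh])
        have hl2 : a.length = b2.length := by simpa using hl
        obtain ⟨ih1, ih2, ih3⟩ := ih b2 hl2 hne2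
        have hlcp : lcp (c :: a) (c :: b2) = c :: lcp a b2 := by
          simp [lcp, List.zip, List.takeWhile]
        refine ⟨?_, ?_, ?_⟩
        · rw [hlcp]; simpa using ih1
        · rw [hlcp]
          intro j hj
          cases j with
          | zero => simp
          | succ j => simpa using ih2 j (by simpa using hj)
        · rw [hlcp]; simpa using ih3
      · have hlcp : lcp (c :: a) (e :: b2) = [] := by
          cases c <;> cases e <;> simp_all [lcp, List.zip, List.zipWith, List.takeWhile]
        rw [hlcp]
        refine ⟨by simp, by simp, by simpa using hc⟩

lemma sigmaW_cons (n : ℕ) (c : Bool) (w : List Bool) :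
    sigmaW n (c :: w) = sigmaLetter n c * sigmaW n w := by simp [sigmaW]

lemma sigmaW_mor (n : ℕ) (h : Bool → List Bool) (τ : Equiv.Perm (Fin n))
    (hτ0 : τ * sigmaW n (h false) * τ⁻¹ = sigmaLetter n false)
    (hτ1 : τ * sigmaW n (h true) * τ⁻¹ = sigmaLetter n true) :
    ∀ w, τ * sigmaW n (mor h w) * τ⁻¹ = sigmaW n w := by
  intro w
  induction w with
  | nil => simp [mor, sigmaW]
  | cons c w ih =>
    rw [mor_cons, sigmaW_cons]
    have hsplit : sigmaW n (h c ++ mor h w) = sigmaW n (h c) * sigmaW n (mor h w) := by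
      simp [sigmaW]
    rw [hsplit]
    have hc : τ * sigmaW n (h c) * τ⁻¹ = sigmaLetter n c := by
      cases c
      · exact hτ0
      · exact hτ1
    calc τ * (sigmaW n (h c) * sigmaW n (mor h w)) * τ⁻¹
        = (τ * sigmaW n (h c) * τ⁻¹) * (τ * sigmaW n (mor h w) * τ⁻¹) := by group
      _ = _ := by rw [hc, ih]

section FP
variable (h : Bool → List Bool) (r : ℕ) (u : ℕ → Bool)

lemma fix_prefix (hb : ∀ b, (h b).length = r) (hfix : FixedPointOf h u) (N : ℕ) :
    wordOf u 0 (r * N) = mor h (wordOf u 0 N) := by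
  have := hfix (wordOf u 0 N) (prefixOfInf_wordOf u N)
  unfold PrefixOfInf at this
  rwa [mor_length h r hb, wordOf_length] at this

lemma blockEq (hb : ∀ b, (h b).length = r) (hfix : FixedPointOf h u) (m : ℕ) :
    wordOf u (r * m) r = h (u m) := by
  have e1 := fix_prefix h r u hb hfix m
  have e2 := fix_prefix h r u hb hfix (m + 1)
  rw [Nat.mul_succ, wordOf_append] at e2
  have e3 : wordOf u 0 (m + 1) = wordOf u 0 m ++ [u m] := by
    rw [wordOf_append u 0 m 1, wordOf_one]; simp
  have e4 : mor h [u m] = h (u m) := by simp [mor]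
  rw [e3, mor_append, e4, e1] at e2
  simpa using List.append_cancel_left e2

lemma blockGet (hb : ∀ b, (h b).length = r) (hfix : FixedPointOf h u) (m j : ℕ)
    (hj : j < r) : (h (u m))[j]? = some (u (r * m + j)) := by
  rw [← blockEq h r u hb hfix m]
  exact wordOf_getElem? u (r * m) r j hj

lemma hinj (hne : h false ≠ h true) : ∀ b b', h b = h b' → b = b' := by
  intro b b' hbe
  cases b <;> cases b' <;>
    first
      | rfl
      | exact absurd hbe hne
      | exact absurd hbe.symm hne

lemma blockCongr (hb : ∀ b, (h b).length = r) (hfix : FixedPointOf h u)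
    (m₁ m₂ : ℕ) (hm : u m₁ = u m₂) : ∀ j < r, u (r * m₁ + j) = u (r * m₂ + j) := by
  intro j hj
  have g1 := blockGet h r u hb hfix m₁ j hj
  have g2 := blockGet h r u hb hfix m₂ j hj
  rw [hm, g2] at g1
  exact (Option.some.inj g1).symm

lemma blockInj (hb : ∀ b, (h b).length = r) (hfix : FixedPointOf h u)
    (hne : h false ≠ h true) (m₁ m₂ : ℕ)
    (hm : ∀ j < r, u (r * m₁ + j) = u (r * m₂ + j)) : u m₁ = u m₂ := by
  apply hinj h hne
  have : wordOf u (r * m₁) r = wordOf u (r * m₂) r := by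
    rw [wordOf_eq_iff]; exact hm
  rw [blockEq h r u hb hfix m₁, blockEq h r u hb hfix m₂] at this
  exact this

lemma segEq (hb : ∀ b, (h b).length = r) (hfix : FixedPointOf h u) (i : ℕ) :
    ∀ L, wordOf u (r * i) (r * L) = mor h (wordOf u i L) := by
  intro L
  induction L with
  | zero => simp [wordOf, mor]
  | succ L ih =>
    rw [Nat.mul_succ, wordOf_append, ih]
    have e3 : wordOf u i (L + 1) = wordOf u i L ++ [u (i + L)] := by
      rw [wordOf_append u i L 1, wordOf_one]
    rw [e3, mor_append]
    have e4 : mor h [u (i + L)] = h (u (i + L)) := by simp [mor]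
    rw [e4, ← blockEq h r u hb hfix (i + L)]
    congr 1
    · ring


lemma not_markable_nil (hr : 2 ≤ r) : ¬ Markable h r u [] := by
  intro hmk
  have := hmk [] [] [] [u 0] (by simp; omega) (by simp; omega) ?_ ?_
  · simp at this
  · apply prefixOfInf_of_eq u 0; simp [mor, wordOf]
  · apply prefixOfInf_of_eq u 1; simp [mor, wordOf_one]

end FP

lemma geom_succ (r s : ℕ) :
    ∑ i ∈ Finset.range (s + 1), r ^ i = 1 + r * ∑ i ∈ Finset.range s, r ^ i := by
  rw [Finset.sum_range_succ']
  simp only [pow_succ, pow_zero, ← Finset.sum_mul]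
  ring

end KRD

/-- The full descent for kernel repetitions: if every factor of `𝐮` of length at least
`r` is markable, and `V = PE` occurs maximally with period `q = |P|` at position `d` in
`𝐮` with `σ_n(P) = id`, then there are `s ≥ 0` and a kernel repetition `P₀E₀` occurring
in `𝐮`, with period `|P₀| ≥ 1`, `σ_n(P₀) = id`, non-markable excess `E₀` (hence `|E₀| < r`),
such that `|PE| = r^s·|P₀E₀| + |η′|·(1 + r + ⋯ + r^{s-1})` and `|P| = r^s·|P₀|`, where
`η′` is the longest common prefix of `h(0)` and `h(1)`. -/
theorem kernel_repetition_descent (n : ℕ) (hn : 2 ≤ n)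
    (h : Bool → List Bool) (r : ℕ) (hr : 2 ≤ r)
    (h0 : (h false).length = r) (h1 : (h true).length = r) (hne : h false ≠ h true)
    (halg : AlgCond n h)
    (u : ℕ → Bool) (hfix : FixedPointOf h u)
    (hallmark : ∀ v : List Bool, (∃ i, OccursAt v u i) → r ≤ v.length → Markable h r u v)
    (P E : List Bool) (d : ℕ)
    (hocc : OccursAt (P ++ E) u d)
    (hP : 1 ≤ P.length) (hE : 1 ≤ E.length)
    (hper : HasPeriodL (P ++ E) P.length)
    (hker : sigmaW n P = 1)
    (hmax : MaxOcc u d (P ++ E).length P.length) :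
    ∃ (s : ℕ) (P₀ E₀ : List Bool),
      (∃ i, OccursAt (P₀ ++ E₀) u i) ∧
      1 ≤ P₀.length ∧
      HasPeriodL (P₀ ++ E₀) P₀.length ∧
      sigmaW n P₀ = 1 ∧
      ¬ Markable h r u E₀ ∧
      E₀.length < r ∧
      (P ++ E).length =
        r ^ s * (P₀ ++ E₀).length +
          (lcp (h false) (h true)).length * ∑ i ∈ Finset.range s, r ^ i ∧
      P.length = r ^ s * P₀.length := by
  classical
  have hb : ∀ b, (h b).length = r := by intro b; cases b; exact h0; exact h1
  obtain ⟨τ, hτ0, hτ1⟩ := halg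
  have lcpS := KRD.lcp_spec (h false) (h true) (by rw [h0, h1]) hne
  set k := (lcp (h false) (h true)).length with hkdef
  have hkr : k < r := by rw [hkdef, ← h0]; exact lcpS.1
  -- the "base" answer when the excess is not markable
  have base : ∀ (P E : List Bool) (d : ℕ), OccursAt (P ++ E) u d → 1 ≤ P.length →
      HasPeriodL (P ++ E) P.length → sigmaW n P = 1 → ¬ Markable h r u E →
      ∃ (s : ℕ) (P₀ E₀ : List Bool),
        (∃ i, OccursAt (P₀ ++ E₀) u i) ∧ 1 ≤ P₀.length ∧
        HasPeriodL (P₀ ++ E₀) P₀.length ∧ sigmaW n P₀ = 1 ∧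
        ¬ Markable h r u E₀ ∧ E₀.length < r ∧
        (P ++ E).length = r ^ s * (P₀ ++ E₀).length + k * ∑ i ∈ Finset.range s, r ^ i ∧
        P.length = r ^ s * P₀.length := by
    intro P E d hocc hP hper hker hmk
    refine ⟨0, P, E, ⟨d, hocc⟩, hP, hper, hker, hmk, ?_, by simp, by simp⟩
    by_contra hge
    push_neg at hge
    apply hmk
    apply hallmark E ?_ hge
    refine ⟨d + P.length, ?_⟩
    have hocc' : wordOf u d (P.length + E.length) = P ++ E := by
      rw [← List.length_append]; exact hocc
    rw [KRD.wordOf_append] at hocc'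
    have hEq := (List.append_inj hocc' (KRD.wordOf_length u d P.length)).2
    exact hEq
  suffices H : ∀ N (P E : List Bool) (d : ℕ), E.length ≤ N →
      OccursAt (P ++ E) u d → 1 ≤ P.length → HasPeriodL (P ++ E) P.length →
      sigmaW n P = 1 → MaxOcc u d (P ++ E).length P.length →
      ∃ (s : ℕ) (P₀ E₀ : List Bool),
        (∃ i, OccursAt (P₀ ++ E₀) u i) ∧ 1 ≤ P₀.length ∧
        HasPeriodL (P₀ ++ E₀) P₀.length ∧ sigmaW n P₀ = 1 ∧
        ¬ Markable h r u E₀ ∧ E₀.length < r ∧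
        (P ++ E).length = r ^ s * (P₀ ++ E₀).length + k * ∑ i ∈ Finset.range s, r ^ i ∧
        P.length = r ^ s * P₀.length by
    exact H E.length P E d le_rfl hocc hP hper hker hmax
  intro N
  induction N with
  | zero =>
    intro P E d hlen hocc hP hper hker hmax
    by_cases hmk : Markable h r u E
    · exfalso
      have hE0 : E = [] := List.length_eq_zero_iff.mp (by omega)
      rw [hE0] at hmk
      exact KRD.not_markable_nil h r u hr hmk
    · exact base P E d hocc hP hper hker hmk
  | succ N ih =>
    intro P E d hlen hocc hP hper hker hmax
    by_cases hmk : Markable h r u E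
    swap
    · exact base P E d hocc hP hper hker hmk
    -- E is markable: perform one descent step
    set q := P.length with hqdef
    set e := E.length with hedef
    have he1 : 1 ≤ e := by
      by_contra h'
      have hE0 : E = [] := List.length_eq_zero_iff.mp (by omega)
      rw [hE0] at hmk
      exact KRD.not_markable_nil h r u hr hmk
    have hLen : (P ++ E).length = q + e := by simp [hqdef, hedef]
    -- decompose the occurrence
    have hocc' : wordOf u d (q + e) = P ++ E := by rw [← hLen]; exact hocc
    rw [KRD.wordOf_append] at hocc'
    obtain ⟨hPw, hEw⟩ := List.append_inj hocc' (KRD.wordOf_length u d q)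
    -- pointwise period
    have per : ∀ i, i < e → u (d + i) = u (d + (i + q)) := by
      have hper' : HasPeriodL (wordOf u d (q + e)) q := by
        rw [KRD.wordOf_append, hPw, hEw]
        exact hper
      rw [KRD.hasPeriodL_wordOf_iff] at hper'
      intro i hi
      exact hper' i (by omega)
    obtain ⟨hm1, hm2⟩ := hmax
    rw [hLen] at hm1 hm2
    -- pointwise maximality
    have maxL : d = 0 ∨ u (d - 1) ≠ u (d - 1 + q) := by
      rcases Nat.eq_zero_or_pos d with hd0 | hd1
      · exact Or.inl hd0
      rcases hm1 with hd0 | hnp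
      · exact Or.inl hd0
      right
      intro heq
      apply hnp
      rw [KRD.hasPeriodL_wordOf_iff]
      intro i hi
      rcases Nat.eq_zero_or_pos i with rfl | hi1
      · have e2 : d - 1 + (0 + q) = d - 1 + q := by omega
        rw [e2]
        simpa using heq
      · have hpi := per (i - 1) (by omega)
        have e1 : d - 1 + i = d + (i - 1) := by omega
        have e2 : d - 1 + (i + q) = d + (i - 1 + q) := by omega
        rw [e1, e2]
        exact hpi
    have maxR : ¬ u (d + e) = u (d + (e + q)) := by
      intro heq
      apply hm2
      rw [KRD.hasPeriodL_wordOf_iff]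
      intro i hi
      rcases Nat.lt_or_ge i e with hie | hie
      · exact per i hie
      · have : i = e := by omega
        rw [this]
        exact heq
    -- markability: synchronize the two occurrences of E at d and d + q
    set m := d / r with hmdef
    set a := d % r with hadef
    set m' := (d + q) / r with hm'def
    set a' := (d + q) % r with ha'def
    have hdm : d = r * m + a := (Nat.div_add_mod d r).symm
    have hdqm : d + q = r * m' + a' := (Nat.div_add_mod (d + q) r).symm
    have har : a < r := Nat.mod_lt d (by omega)
    have har' : a' < r := Nat.mod_lt (d + q) (by omega)
    have hEd : wordOf u d e = E := by
      rw [← hEw, KRD.wordOf_eq_iff]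
      intro j hj
      have hpj := per j hj
      have e1 : d + (j + q) = d + q + j := by omega
      rw [e1] at hpj
      exact hpj
    have p1 : PrefixOfInf (mor h (wordOf u 0 m) ++ wordOf u (r * m) a ++ E) u := by
      apply KRD.prefixOfInf_of_eq u (r * m + a + e)
      rw [KRD.wordOf_append u 0 (r * m + a) e, KRD.wordOf_append u 0 (r * m) a]
      simp only [zero_add]
      rw [KRD.fix_prefix h r u hb hfix m]
      have hEd' : wordOf u (r * m + a) e = E := by rw [← hdm]; exact hEd
      rw [hEd', List.append_assoc]
    have p2 : PrefixOfInf (mor h (wordOf u 0 m') ++ wordOf u (r * m') a' ++ E) u := by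
      apply KRD.prefixOfInf_of_eq u (r * m' + a' + e)
      rw [KRD.wordOf_append u 0 (r * m' + a') e, KRD.wordOf_append u 0 (r * m') a']
      simp only [zero_add]
      rw [KRD.fix_prefix h r u hb hfix m']
      have hEd' : wordOf u (r * m' + a') e = E := by rw [← hdqm]; exact hEw.symm ▸ rfl
      rw [hEd', List.append_assoc]
    have hxy := hmk (wordOf u 0 m) (wordOf u 0 m')
      (wordOf u (r * m) a) (wordOf u (r * m') a')
      (by rw [KRD.wordOf_length]; exact har) (by rw [KRD.wordOf_length]; exact har') p1 p2
    have haa : a = a' := by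
      have := congrArg List.length hxy
      rwa [KRD.wordOf_length, KRD.wordOf_length] at this
    have ha0 : a = 0 := by
      by_contra ha
      have ha1 : 1 ≤ a := by omega
      have hd1 : 1 ≤ d := by omega
      rcases maxL with h' | h'
      · omega
      apply h'
      have hpt : ∀ j < a, u (r * m + j) = u (r * m' + j) := by
        rw [← haa] at hxy
        rw [KRD.wordOf_eq_iff] at hxy
        exact hxy
      have hptj := hpt (a - 1) (by omega)
      have e1 : d - 1 = r * m + (a - 1) := by omega
      rw [e1]
      have e2 : r * m + (a - 1) + q = r * m' + (a - 1) := by omega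
      rw [e2]
      exact hptj
    have ha'0 : a' = 0 := by omega
    have hdrm : d = r * m := by omega
    have hdqrm : d + q = r * m' := by omega
    have hmm : m < m' := by
      have : r * m < r * m' := by omega
      exact Nat.lt_of_mul_lt_mul_left this
    set q₁ := m' - m with hq1def
    have hq : q = r * q₁ := by
      have h1' : r * m' = r * m + r * q₁ := by
        rw [← Nat.mul_add]
        congr 1
        omega
      omega
    have hq₁1 : 1 ≤ q₁ := by omega
    set e₁ := e / r with he1def
    set ρ := e % r with hρdef
    have hee : e = r * e₁ + ρ := (Nat.div_add_mod e r).symm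
    have hρr : ρ < r := Nat.mod_lt e (by omega)
    -- sublevel period
    have sPer : ∀ i, i < e₁ → u (m + i) = u (m + (i + q₁)) := by
      intro i hi
      apply KRD.blockInj h r u hb hfix hne
      intro j hj
      have hidx : r * i + j < e := by
        have h2 : r * (i + 1) ≤ r * e₁ := Nat.mul_le_mul_left r (by omega)
        have h3 : r * (i + 1) = r * i + r := by ring
        omega
      have hpij := per (r * i + j) hidx
      have x1 : r * (m + i) = r * m + r * i := by ring
      have x2 : r * (m + (i + q₁)) = r * m + r * i + r * q₁ := by ring
      have e1 : r * (m + i) + j = d + (r * i + j) := by omega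
      have e2 : r * (m + (i + q₁)) + j = d + (r * i + j + q) := by omega
      rw [e1, e2]
      exact hpij
    -- sublevel left maximality
    have sMaxL : m = 0 ∨ u (m - 1) ≠ u (m - 1 + q₁) := by
      rcases Nat.eq_zero_or_pos m with hm0 | hm1
      · exact Or.inl hm0
      right
      intro heq
      have hd1 : 1 ≤ d := by
        have : r * 1 ≤ r * m := Nat.mul_le_mul_left r hm1
        omega
      rcases maxL with h' | h'
      · omega
      apply h'
      have hbc := KRD.blockCongr h r u hb hfix (m - 1) (m - 1 + q₁) heq (r - 1) (by omega)
      have x1 : r * (m - 1) + r = r * m := by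
        have : r * ((m - 1) + 1) = r * (m - 1) + r := by ring
        have h2 : (m - 1) + 1 = m := by omega
        rw [h2] at this
        omega
      have x2 : r * (m - 1 + q₁) = r * (m - 1) + r * q₁ := by ring
      have e1 : d - 1 = r * (m - 1) + (r - 1) := by omega
      rw [e1]
      have e2 : r * (m - 1) + (r - 1) + q = r * (m - 1 + q₁) + (r - 1) := by omega
      rw [e2]
      exact hbc
    -- sublevel right maximality
    have sMaxR : u (m + e₁) ≠ u (m + (e₁ + q₁)) := by
      intro heq
      apply maxR
      have hbc := KRD.blockCongr h r u hb hfix (m + e₁) (m + (e₁ + q₁)) heq ρ hρr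
      have x1 : r * (m + e₁) = r * m + r * e₁ := by ring
      have x2 : r * (m + (e₁ + q₁)) = r * m + r * e₁ + r * q₁ := by ring
      have e1 : d + e = r * (m + e₁) + ρ := by omega
      have e2 : d + (e + q) = r * (m + (e₁ + q₁)) + ρ := by omega
      rw [e1, e2]
      exact hbc
    -- the leftover equals the length of the longest common prefix
    have agree : ∀ j, j < ρ → (h (u (m + e₁)))[j]? = (h (u (m + (e₁ + q₁))))[j]? := by
      intro j hj
      rw [KRD.blockGet h r u hb hfix (m + e₁) j (lt_trans hj hρr),
        KRD.blockGet h r u hb hfix (m + (e₁ + q₁)) j (lt_trans hj hρr)]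
      have hpij := per (r * e₁ + j) (by omega)
      have x1 : r * (m + e₁) = r * m + r * e₁ := by ring
      have x2 : r * (m + (e₁ + q₁)) = r * m + r * e₁ + r * q₁ := by ring
      have e1 : r * (m + e₁) + j = d + (r * e₁ + j) := by omega
      have e2 : r * (m + (e₁ + q₁)) + j = d + (r * e₁ + j + q) := by omega
      rw [e1, e2, hpij]
    have hρk : ρ = k := by
      rcases lt_trichotomy ρ k with hlt | heqk | hgt
      · exfalso
        have hjk := lcpS.2.1 ρ hlt
        have hbb : u (m + e₁) ≠ u (m + (e₁ + q₁)) := sMaxR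
        have hsame : (h (u (m + e₁)))[ρ]? = (h (u (m + (e₁ + q₁))))[ρ]? := by
          cases c1 : u (m + e₁) <;> cases c2 : u (m + (e₁ + q₁)) <;>
            rw [c1, c2] at hbb <;>
              first
                | exact absurd rfl hbb
                | exact hjk
                | exact hjk.symm
        rw [KRD.blockGet h r u hb hfix (m + e₁) ρ hρr,
          KRD.blockGet h r u hb hfix (m + (e₁ + q₁)) ρ hρr] at hsame
        have huu := Option.some.inj hsame
        apply maxR
        have x1 : r * (m + e₁) = r * m + r * e₁ := by ring
        have x2 : r * (m + (e₁ + q₁)) = r * m + r * e₁ + r * q₁ := by ring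
        have e1 : d + e = r * (m + e₁) + ρ := by omega
        have e2 : d + (e + q) = r * (m + (e₁ + q₁)) + ρ := by omega
        rw [e1, e2]
        exact huu
      · exact heqk
      · exfalso
        have hk2 := agree k hgt
        have hbb : u (m + e₁) ≠ u (m + (e₁ + q₁)) := sMaxR
        apply lcpS.2.2
        cases c1 : u (m + e₁) <;> cases c2 : u (m + (e₁ + q₁)) <;>
          rw [c1, c2] at hbb hk2 <;>
            first
              | exact absurd rfl hbb
              | exact hk2
              | exact hk2.symm
    -- assemble the sublevel repetition
    set P₁ := wordOf u m q₁ with hP1def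
    set E₁ := wordOf u (m + q₁) e₁ with hE1def
    have hlenP₁ : P₁.length = q₁ := KRD.wordOf_length u m q₁
    have hlenE₁ : E₁.length = e₁ := KRD.wordOf_length u (m + q₁) e₁
    have happ : P₁ ++ E₁ = wordOf u m (q₁ + e₁) := (KRD.wordOf_append u m q₁ e₁).symm
    have hlenPE₁ : (P₁ ++ E₁).length = q₁ + e₁ := by
      rw [List.length_append, hlenP₁, hlenE₁]
    have hocc₁ : OccursAt (P₁ ++ E₁) u m := by
      unfold OccursAt
      rw [hlenPE₁, happ]
    have hper₁ : HasPeriodL (P₁ ++ E₁) P₁.length := by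
      rw [happ, hlenP₁, KRD.hasPeriodL_wordOf_iff]
      intro i hi
      exact sPer i (by omega)
    have hker₁ : sigmaW n P₁ = 1 := by
      have hmor : mor h P₁ = P := by
        rw [← hPw, hdrm, hq]
        exact (KRD.segEq h r u hb hfix m q₁).symm
      have hcj := KRD.sigmaW_mor n h τ hτ0 hτ1 P₁
      rw [hmor, hker] at hcj
      rw [← hcj]
      group
    have hmax₁ : MaxOcc u m (P₁ ++ E₁).length P₁.length := by
      rw [hlenPE₁, hlenP₁]
      constructor
      · rcases sMaxL with hm0 | hneq
        · exact Or.inl hm0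
        right
        intro hp
        rw [KRD.hasPeriodL_wordOf_iff] at hp
        have := hp 0 (by omega)
        apply hneq
        have e2 : m - 1 + (0 + q₁) = m - 1 + q₁ := by omega
        rw [e2] at this
        simpa using this
      · intro hp
        rw [KRD.hasPeriodL_wordOf_iff] at hp
        have := hp e₁ (by omega)
        exact sMaxR this
    have hE₁N : E₁.length ≤ N := by
      rw [hlenE₁]
      have h2 : 2 * e₁ ≤ r * e₁ := Nat.mul_le_mul_right e₁ hr
      omega
    obtain ⟨s, P₀, E₀, hs1, hs2, hs3, hs4, hs5, hs6, hs7, hs8⟩ :=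
      ih P₁ E₁ m hE₁N hocc₁ (by rw [hlenP₁]; exact hq₁1) hper₁ hker₁ hmax₁
    refine ⟨s + 1, P₀, E₀, hs1, hs2, hs3, hs4, hs5, hs6, ?_, ?_⟩
    · rw [hLen, KRD.geom_succ]
      rw [hlenPE₁] at hs7
      have hpow : r ^ (s + 1) = r * r ^ s := by ring
      calc q + e = r * (q₁ + e₁) + ρ := by
            have hx : r * (q₁ + e₁) = r * q₁ + r * e₁ := by ring
            omega
        _ = r * (r ^ s * (P₀ ++ E₀).length + k * ∑ i ∈ Finset.range s, r ^ i) + k := by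
            rw [← hs7, hρk]
        _ = r ^ (s + 1) * (P₀ ++ E₀).length + k * (1 + r * ∑ i ∈ Finset.range s, r ^ i) := by
            rw [hpow]; ring
    · rw [hlenP₁] at hs8
      show q = r ^ (s + 1) * P₀.length
      rw [hq, hs8]
      ring
end

section
/- Let n ≥ 2, and let r, s, c, a, b, P, L be non-negative integers with 2 ≤ r ≤ 4n, c ≤ r − 1, b ≤ r − 1, a ≥ 1, P = r^s·a, and L = r^s·(a + b) + c·(r^s − 1)/(r − 1). If (L + n − 1)·(n − 1) > n·P, then a + b < 9n² − 6n + 1. (Here P plays the role of |P|, L of |PE|, a of |𝒫|, b of |𝓔|, and c of |η′| in the descent for kernel repetitions; the hypothesis expresses that the corresponding repetition over Σ_n has exponent greater than n/(n−1).) -/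
set_option maxHeartbeats 800000

lemma geom_aux (r s : ℕ) (hr : 1 ≤ r) :
    (r - 1) * ∑ i ∈ Finset.range s, r ^ i = r ^ s - 1 := by
  induction s with
  | zero => simp
  | succ k ih =>
    rw [Finset.sum_range_succ, Nat.mul_add, ih]
    have h1 : 1 ≤ r ^ k := Nat.one_le_pow _ _ hr
    have h2 : r ^ k ≤ r ^ (k+1) := Nat.pow_le_pow_right hr (by omega)
    have : (r - 1) * r ^ k = r ^ (k+1) - r ^ k := by
      rw [Nat.sub_mul, one_mul, pow_succ, mul_comm]
    omega

/-- The arithmetic of the descent for kernel repetitions: if `P = r^s·a`,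
`L = r^s·(a+b) + c·(1 + r + ⋯ + r^{s-1})` with `2 ≤ r ≤ 4n`, `c ≤ r−1`, `b ≤ r−1`,
`a ≥ 1`, and the corresponding repetition over `Σ_n` has exponent greater than
`n/(n−1)`, i.e. `(L + n − 1)·(n − 1) > n·P`, then `a + b < 9n² − 6n + 1`. -/
theorem descent_arithmetic (n r s c a b P L : ℕ) (hn : 2 ≤ n)
    (hr₁ : 2 ≤ r) (hr₂ : r ≤ 4 * n) (hc : c ≤ r - 1) (hb : b ≤ r - 1) (ha : 1 ≤ a)
    (hP : P = r ^ s * a)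
    (hL : L = r ^ s * (a + b) + c * ∑ i ∈ Finset.range s, r ^ i)
    (hexp : (L + n - 1) * (n - 1) > n * P) :
    a + b < 9 * n ^ 2 - 6 * n + 1 := by
  have ht : 1 ≤ r ^ s := Nat.one_le_pow _ _ (by omega)
  have hcS : c * ∑ i ∈ Finset.range s, r ^ i ≤ r ^ s - 1 := by
    calc c * ∑ i ∈ Finset.range s, r ^ i
        ≤ (r - 1) * ∑ i ∈ Finset.range s, r ^ i := Nat.mul_le_mul_right _ hc
      _ = r ^ s - 1 := geom_aux r s (by omega)
  have key : (r ^ s * (a + b) + r ^ s + n) * (n - 1) > n * (r ^ s * a) := by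
    calc n * (r ^ s * a) < (L + n - 1) * (n - 1) := by rw [← hP]; exact hexp
      _ ≤ (r ^ s * (a + b) + r ^ s + n) * (n - 1) :=
          Nat.mul_le_mul_right _ (by omega)
  have hb' : b ≤ 4 * n - 1 := by omega
  have hcast : ((n - 1 : ℕ) : ℤ) = (n:ℤ) - 1 := by omega
  zify at key
  rw [hcast] at key
  have hn' : (2:ℤ) ≤ n := by exact_mod_cast hn
  have ht' : (1:ℤ) ≤ (r:ℤ) ^ s := by exact_mod_cast ht
  have ha' : (1:ℤ) ≤ (a:ℤ) := by exact_mod_cast ha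
  have hb'' : (b:ℤ) ≤ 4 * n - 1 := by
    have : (b:ℤ) ≤ ((4*n - 1 : ℕ) : ℤ) := by exact_mod_cast hb'
    omega
  have h1 : (a:ℤ) < ((b:ℤ)+1)*((n:ℤ)-1) + (n:ℤ)*((n:ℤ)-1) := by
    by_contra h
    push_neg at h
    have h2 := mul_le_mul_of_nonneg_left h (by linarith : (0:ℤ) ≤ (r:ℤ)^s)
    nlinarith [mul_nonneg (by linarith : (0:ℤ) ≤ (r:ℤ)^s - 1)
      (mul_nonneg (by linarith : (0:ℤ) ≤ (n:ℤ)) (by linarith : (0:ℤ) ≤ (n:ℤ)-1))]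
  have h6 : 6 * n ≤ 9 * n ^ 2 := by nlinarith
  zify [h6]
  have h7 : ((b:ℤ)+1)*((n:ℤ)-1) ≤ (4*(n:ℤ))*((n:ℤ)-1) :=
    mul_le_mul_of_nonneg_right (by linarith) (by linarith)
  have h8 : (5:ℤ) * n ≤ 4 * (n:ℤ)^2 := by nlinarith
  linarith
end

section
/- Let h : {0,1}* → {0,1}* be a morphism such that 011 is a factor of h(0) and 110 is a factor of h(1), and let 𝐮 be an infinite fixed point of h. Then every finite factor of 𝐮 is a factor of h^m(1) for some integer m ≥ 0. -/
lemma mor_infix (h : Bool → List Bool) {v w : List Bool} (hvw : v <:+: w) :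
    mor h v <:+: mor h w := by
  obtain ⟨s, t, rfl⟩ := hvw
  exact ⟨mor h s, mor h t, by simp [mor]⟩

lemma iter_infix (h : Bool → List Bool) (m : ℕ) {v w : List Bool} (hvw : v <:+: w) :
    (mor h)^[m] v <:+: (mor h)^[m] w := by
  induction m with
  | zero => simpa
  | succ n ih => simp only [Function.iterate_succ_apply']; exact mor_infix h ih

lemma mor_length_s12 (h : Bool → List Bool) (h3 : ∀ b, 3 ≤ (h b).length) (w : List Bool) :
    3 * w.length ≤ (mor h w).length := by
  induction w with
  | nil => simp [mor]
  | cons b t ih =>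
    have hb : mor h (b :: t) = h b ++ mor h t := by simp [mor]
    rw [hb, List.length_append]
    have := h3 b
    simp only [List.length_cons]
    omega

lemma wordOf_add_s12 (u : ℕ → Bool) (i n : ℕ) :
    wordOf u 0 (i + n) = wordOf u 0 i ++ wordOf u i n := by
  simp [wordOf, List.range_add, List.map_map, Function.comp]

lemma prefix_wordOf (u : ℕ → Bool) {p : List Bool} (hp : PrefixOfInf p u) {i n : ℕ}
    (hle : i + n ≤ p.length) : wordOf u i n <:+: p := by
  have h1 : wordOf u 0 (i + n) ++ wordOf u (i + n) (p.length - (i + n)) = p := by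
    rw [← wordOf_add_s12]
    have heq : i + n + (p.length - (i + n)) = p.length := by omega
    rw [heq]; exact hp
  rw [wordOf_add_s12] at h1
  exact ⟨wordOf u 0 i, wordOf u (i + n) (p.length - (i + n)), by simpa using h1⟩

/-- If `011` is a factor of `h(0)` and `110` is a factor of `h(1)`, then every finite
factor of a fixed point `𝐮` of `h` is a factor of `h^m(1)` for some `m ≥ 0`. -/
theorem factor_of_iterate (h : Bool → List Bool)
    (h0 : [false, true, true] <:+: h false) (h1 : [true, true, false] <:+: h true)
    (u : ℕ → Bool) (hfix : FixedPointOf h u)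
    (v : List Bool) (hfac : ∃ i, OccursAt v u i) :
    ∃ m : ℕ, v <:+: (mor h)^[m] [true] := by
  obtain ⟨i, hocc⟩ := hfac
  have h3 : ∀ b, 3 ≤ (h b).length := by
    intro b; cases b
    · simpa using h0.length_le
    · simpa using h1.length_le
  have hpref : ∀ m, PrefixOfInf ((mor h)^[m] [u 0]) u := by
    intro m; induction m with
    | zero => simp [PrefixOfInf, wordOf, List.range_succ]
    | succ n ih => rw [Function.iterate_succ_apply']; exact hfix _ ih
  have hlen : ∀ m, m + 1 ≤ ((mor h)^[m] [u 0]).length := by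
    intro m; induction m with
    | zero => simp
    | succ n ih =>
      rw [Function.iterate_succ_apply']
      have := mor_length_s12 h h3 ((mor h)^[n] [u 0])
      omega
  set N := i + v.length with hN
  have hv : v <:+: (mor h)^[N] [u 0] := by
    have hsplit := prefix_wordOf u (hpref N) (i := i) (n := v.length)
      (by have := hlen N; omega)
    rwa [hocc] at hsplit
  have ha1 : [u 0] <:+: mor h [true] := by
    have hm : mor h [true] = h true := by simp [mor]
    rw [hm]
    cases hu : u 0
    · exact List.IsInfix.trans (by decide) h1
    · exact List.IsInfix.trans (by decide) h1
  refine ⟨N + 1, ?_⟩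
  have hstep := iter_infix h N ha1
  rw [← Function.iterate_succ_apply] at hstep
  exact hv.trans hstep
end
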